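/- arXiv:2308.14681 — 5 statements merged into one kernel-verified Lean document; each statement's English description precedes it below -/
import Mathlib

section
/- For any positive integer m and any integer r coprime to m, one has ω_r(m) ≥ 1/m, where ω_r is the multiplicative function whose value at a prime power q^j is 1/(q^{j-1}(q-1)) if r ≢ 1 (mod q^{⌈j/2⌉}) and (q^{⌊j/2⌋+1} + q^{⌊j/2⌋} − 1)/(q^{j+⌊j/2⌋−1}(q²−1)) otherwise. -/
/-- The value of the multiplicative function `ω_r` at a prime power `q ^ j`. -/
noncomputable def omegaPP (r q j : ℕ) : ℝ :=
  if r % q ^ ((j + 1) / 2) = 1 % q ^ ((j + 1) / 2) then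
    ((q : ℝ) ^ (j / 2 + 1) + (q : ℝ) ^ (j / 2) - 1) /
      ((q : ℝ) ^ (j + j / 2 - 1) * ((q : ℝ) ^ 2 - 1))
  else
    1 / ((q : ℝ) ^ (j - 1) * ((q : ℝ) - 1))

/-- The multiplicative function `ω_r`, with `ω_r(m) = ∏_{q^j ∥ m} ω_r(q^j)`. -/
noncomputable def omegaFn (r m : ℕ) : ℝ :=
  ∏ q ∈ m.primeFactors, omegaPP r q (m.factorization q)

lemma omegaPP_ge (r q j : ℕ) (hq : q.Prime) (hj : 1 ≤ j) :
    (1 : ℝ) / (q : ℝ) ^ j ≤ omegaPP r q j := by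
  obtain ⟨k, rfl⟩ : ∃ k, j = k + 1 := ⟨j - 1, by omega⟩
  have hq2 : (2 : ℝ) ≤ (q : ℝ) := by exact_mod_cast hq.two_le
  have hq0 : (0 : ℝ) < (q : ℝ) := by linarith
  unfold omegaPP
  split
  · set a := (k + 1) / 2 with ha
    have h1 : k + 1 + (k + 1) / 2 - 1 = k + a := by omega
    rw [h1]
    have hd : (0:ℝ) < (q:ℝ) ^ (k + a) * ((q:ℝ)^2 - 1) :=
      mul_pos (by positivity) (by nlinarith)
    rw [div_le_div_iff₀ (by positivity) hd, one_mul]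
    have hle : (q : ℝ) ^ (k + 1) ≤ (q : ℝ) ^ (k + a + 1) :=
      pow_le_pow_right₀ (by linarith) (by omega)
    have e1 : (q : ℝ) ^ (k + a) * ((q:ℝ)^2 - 1)
        = (q:ℝ)^(a+1) * (q:ℝ)^(k+1) - (q:ℝ)^(k+a) := by ring
    have e2 : ((q : ℝ) ^ (a + 1) + (q:ℝ)^a - 1) * (q:ℝ)^(k+1)
        = (q:ℝ)^(a+1) * (q:ℝ)^(k+1) + (q:ℝ)^(k+a+1) - (q:ℝ)^(k+1) := by ring
    rw [e1, e2]
    have h0 : (0:ℝ) ≤ (q:ℝ)^(k+a) := by positivity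
    linarith
  · have h1 : k + 1 - 1 = k := rfl
    rw [h1]
    apply one_div_le_one_div_of_le
    · have : (0:ℝ) < (q:ℝ)^k := by positivity
      nlinarith
    · have : (q:ℝ)^k * ((q:ℝ) - 1) ≤ (q:ℝ)^k * (q:ℝ) := by
        have : (0:ℝ) ≤ (q:ℝ)^k := by positivity
        nlinarith
      calc (q:ℝ)^k * ((q:ℝ) - 1) ≤ (q:ℝ)^k * (q:ℝ) := this
        _ = (q:ℝ)^(k+1) := by ring

theorem stmt1 (m r : ℕ) (hm : 0 < m) (hr : Nat.Coprime r m) :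
    (1 : ℝ) / (m : ℝ) ≤ omegaFn r m := by
  have h1 : ∏ q ∈ m.primeFactors, ((1:ℝ) / (q:ℝ) ^ (m.factorization q)) ≤ omegaFn r m := by
    apply Finset.prod_le_prod
    · intro q hq
      positivity
    · intro q hq
      exact omegaPP_ge r q _ (Nat.prime_of_mem_primeFactors hq)
        ((Nat.Prime.factorization_pos_of_dvd (Nat.prime_of_mem_primeFactors hq) hm.ne'
          (Nat.dvd_of_mem_primeFactors hq)))
  refine le_trans (le_of_eq ?_) h1
  rw [Finset.prod_div_distrib, Finset.prod_const_one]
  congr 1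
  have hm' : ∏ x ∈ m.primeFactors, x ^ m.factorization x = m := by
    simpa [Finsupp.prod, Nat.support_factorization] using
      Nat.factorization_prod_pow_eq_self hm.ne'
  exact_mod_cast hm'.symm
end

section
/- Let m be a positive integer and set m̲ = ∏_{q^j ∥ m} q^{⌈j/2⌉}. Define C^{D(m)} = (1/φ(m̲)) ∑_{1 ≤ r ≤ m̲, gcd(r,m̲)=1} ω_r(m). Then C^{D(m)} ≥ 1/m. -/
/-- `m̲ = ∏_{q^j ∥ m} q^⌈j/2⌉`. -/
def mbar (m : ℕ) : ℕ :=
  ∏ q ∈ m.primeFactors, q ^ ((m.factorization q + 1) / 2)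

/-! Each local factor satisfies `ω_r(q^j) ≥ q^{-j}`, so `ω_r(m) ≥ 1/m` for every `r`, and an
average of the values `ω_r(m)` over the `φ(m̲)` residues `r` is at least `1/m` as well. -/

lemma one_div_pow_le_omegaPP (r : ℕ) {q j : ℕ} (hq : 1 < q) (hj : j ≠ 0) :
    1 / (q : ℝ) ^ j ≤ omegaPP r q j := by
  have hq' : (1 : ℝ) < q := by exact_mod_cast hq
  have hpos (k : ℕ) : (0 : ℝ) < (q : ℝ) ^ k := pow_pos (zero_lt_one.trans hq') k
  unfold omegaPP
  split_ifs
  · obtain ⟨n, hn⟩ : ∃ n, j + j / 2 = n + 1 := ⟨j + j / 2 - 1, by omega⟩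
    have hsq : (1 : ℝ) < (q : ℝ) ^ 2 := one_lt_pow₀ hq' two_ne_zero
    have hden : (0 : ℝ) < (q : ℝ) ^ n * ((q : ℝ) ^ 2 - 1) := mul_pos (hpos n) (by linarith)
    rw [hn, Nat.add_sub_cancel, div_le_div_iff₀ (hpos j) hden]
    have hjn : (q : ℝ) ^ j ≤ (q : ℝ) ^ (n + 1) := pow_le_pow_right₀ hq'.le (by omega)
    have hsplit : (q : ℝ) ^ (j / 2) * (q : ℝ) ^ j = (q : ℝ) ^ (n + 1) := by
      rw [← pow_add, ← hn, add_comm]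
    have hdiff : ((q : ℝ) ^ (j / 2 + 1) + (q : ℝ) ^ (j / 2) - 1) * (q : ℝ) ^ j
          - 1 * ((q : ℝ) ^ n * ((q : ℝ) ^ 2 - 1))
        = (q : ℝ) ^ (n + 1) + (q : ℝ) ^ n - (q : ℝ) ^ j := by
      linear_combination ((q : ℝ) + 1) * hsplit
    linarith [hpos n]
  · obtain ⟨k, rfl⟩ := Nat.exists_eq_succ_of_ne_zero hj
    rw [Nat.succ_sub_one]
    refine one_div_le_one_div_of_le (mul_pos (hpos k) (by linarith)) ?_
    rw [pow_succ]
    nlinarith [hpos k]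

lemma one_div_le_omegaFn (r : ℕ) {m : ℕ} (hm : m ≠ 0) : 1 / (m : ℝ) ≤ omegaFn r m := by
  have hm_eq : ∏ q ∈ m.primeFactors, (1 / (q : ℝ) ^ m.factorization q) = 1 / m := by
    rw [Finset.prod_div_distrib, Finset.prod_const_one]
    exact_mod_cast congrArg (fun n : ℕ => 1 / (n : ℝ)) (Nat.prod_factorization_pow_eq_self hm)
  rw [← hm_eq, omegaFn]
  refine Finset.prod_le_prod (fun _ _ => by positivity) fun q hq => ?_
  exact one_div_pow_le_omegaPP r (Nat.prime_of_mem_primeFactors hq).one_lt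
    (Finsupp.mem_support_iff.mp (by rwa [Nat.support_factorization]))

lemma mbar_pos (m : ℕ) : 0 < mbar m :=
  Finset.prod_pos fun _ hq => pow_pos (Nat.prime_of_mem_primeFactors hq).pos _

lemma card_filter_coprime_Icc (n : ℕ) :
    ((Finset.Icc 1 n).filter (·.Coprime n)).card = n.totient := by
  rw [← Nat.filter_coprime_Ico_eq_totient n 1, add_comm]
  simp only [Nat.coprime_comm]
  -- `Ico 1 (n + 1)` and `Icc 1 n` are definitionally equal on `ℕ`
  rfl

theorem stmt2 (m : ℕ) (hm : 0 < m) :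
    (1 : ℝ) / (m : ℝ) ≤
      (1 / (Nat.totient (mbar m) : ℝ)) *
        ∑ r ∈ (Finset.Icc 1 (mbar m)).filter (fun r => r.Coprime (mbar m)), omegaFn r m := by
  have htot : ((mbar m).totient : ℝ) ≠ 0 := by
    exact_mod_cast (Nat.totient_pos.mpr (mbar_pos m)).ne'
  have hsum := Finset.card_nsmul_le_sum ((Finset.Icc 1 (mbar m)).filter (·.Coprime (mbar m)))
    (fun r => omegaFn r m) (1 / (m : ℝ)) fun r _ => one_div_le_omegaFn r hm.ne'
  rw [card_filter_coprime_Icc, nsmul_eq_mul] at hsum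
  calc (1 : ℝ) / m = 1 / (mbar m).totient * ((mbar m).totient * (1 / m)) := by field_simp
    _ ≤ _ := by gcongr
end

section
/- Let n ≥ 2 and g(ℓ) = −1/(ℓ(ℓ²−1)) for primes ℓ, and define C^C_{n,k} = (1/φ(n)) ∏_{ℓ' | gcd(n,k−1)} (1 + g(ℓ')) ∏_{ℓ ∤ n} (1 + g(ℓ)/(ℓ−1)). Then for every k coprime to n: C^C_{n,1} ≤ C^C_{n,k} ≤ C^C_{n,−1}, where C^C_{n,−1} denotes C^C_{n,n−1}. -/
/-- The average density `C^C_{n,k}` of primes of cyclic reduction lying in the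
congruence class `k mod n`:
`C^C_{n,k} = (1/φ(n)) ∏_{ℓ' | gcd(n,k-1)} (1 + g(ℓ')) ∏_{ℓ ∤ n} (1 + g(ℓ)/φ(ℓ))`
where `g(ℓ) = -1/(ℓ(ℓ²-1))`, so `1 + g(ℓ') = 1 - 1/(ℓ'(ℓ'²-1))` and
`1 + g(ℓ)/φ(ℓ) = 1 - 1/(ℓ(ℓ-1)(ℓ²-1))`. -/
noncomputable def CC (n k : ℕ) : ℝ :=
  (1 / (Nat.totient n : ℝ)) *
    (∏ l ∈ (Nat.gcd n (k - 1)).primeFactors, (1 - 1 / ((l : ℝ) * ((l : ℝ) ^ 2 - 1)))) *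
    ∏' l : {l : ℕ // l.Prime ∧ ¬l ∣ n},
      (1 - 1 / (((l : ℕ) : ℝ) * (((l : ℕ) : ℝ) - 1) * (((l : ℕ) : ℝ) ^ 2 - 1)))

lemma factor_nonneg {l : ℕ} (hl : l.Prime) :
    (0 : ℝ) ≤ 1 - 1 / ((l : ℝ) * ((l : ℝ) ^ 2 - 1)) := by
  have h2 : (2 : ℝ) ≤ (l : ℝ) := by exact_mod_cast hl.two_le
  have hpos : (1 : ℝ) ≤ (l : ℝ) * ((l : ℝ) ^ 2 - 1) := by nlinarith
  have h1 : 1 / ((l : ℝ) * ((l : ℝ) ^ 2 - 1)) ≤ 1 := by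
    rw [div_le_one (by linarith)]; linarith
  linarith

lemma factor_le_one {l : ℕ} (hl : l.Prime) :
    (1 : ℝ) - 1 / ((l : ℝ) * ((l : ℝ) ^ 2 - 1)) ≤ 1 := by
  have h2 : (2 : ℝ) ≤ (l : ℝ) := by exact_mod_cast hl.two_le
  have hpos : (0 : ℝ) < (l : ℝ) * ((l : ℝ) ^ 2 - 1) := by nlinarith
  have : (0:ℝ) ≤ 1 / ((l : ℝ) * ((l : ℝ) ^ 2 - 1)) := by positivity
  linarith

lemma prod_anti {s t : Finset ℕ} (hst : s ⊆ t) (ht : ∀ l ∈ t, l.Prime) :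
    ∏ l ∈ t, (1 - 1 / ((l : ℝ) * ((l : ℝ) ^ 2 - 1))) ≤
      ∏ l ∈ s, (1 - 1 / ((l : ℝ) * ((l : ℝ) ^ 2 - 1))) := by
  rw [← Finset.prod_sdiff hst]
  have h1 : ∏ l ∈ t \ s, (1 - 1 / ((l : ℝ) * ((l : ℝ) ^ 2 - 1))) ≤ 1 :=
    Finset.prod_le_one (fun l hl => factor_nonneg (ht l (Finset.mem_sdiff.mp hl).1))
      (fun l hl => factor_le_one (ht l (Finset.mem_sdiff.mp hl).1))
  have h0 : (0 : ℝ) ≤ ∏ l ∈ t \ s, (1 - 1 / ((l : ℝ) * ((l : ℝ) ^ 2 - 1))) :=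
    Finset.prod_nonneg (fun l hl => factor_nonneg (ht l (Finset.mem_sdiff.mp hl).1))
  have h2 : (0 : ℝ) ≤ ∏ l ∈ s, (1 - 1 / ((l : ℝ) * ((l : ℝ) ^ 2 - 1))) :=
    Finset.prod_nonneg (fun l hl => factor_nonneg (ht l (hst hl)))
  nlinarith

theorem stmt9 (n k : ℕ) (hn : 2 ≤ n) (hk : Nat.Coprime k n) :
    CC n 1 ≤ CC n k ∧ CC n k ≤ CC n (n - 1) := by
  have hn0 : n ≠ 0 := by omega
  have hc : (0 : ℝ) ≤ 1 / (Nat.totient n : ℝ) := by positivity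
  have hT : (0 : ℝ) ≤ ∏' l : {l : ℕ // l.Prime ∧ ¬l ∣ n},
      (1 - 1 / (((l : ℕ) : ℝ) * (((l : ℕ) : ℝ) - 1) * (((l : ℕ) : ℝ) ^ 2 - 1))) := by
    set f : {l : ℕ // l.Prime ∧ ¬l ∣ n} → ℝ := fun l =>
      (1 - 1 / (((l : ℕ) : ℝ) * (((l : ℕ) : ℝ) - 1) * (((l : ℕ) : ℝ) ^ 2 - 1))) with hf
    have hnn : ∀ l, 0 ≤ f l := by
      intro l
      have h2 : (2 : ℝ) ≤ ((l : ℕ) : ℝ) := by exact_mod_cast l.2.1.two_le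
      have hpos : (1 : ℝ) ≤ ((l : ℕ) : ℝ) * (((l : ℕ) : ℝ) - 1) * (((l : ℕ) : ℝ) ^ 2 - 1) := by
        nlinarith [sq_nonneg (((l : ℕ) : ℝ) - 2), sq_nonneg (((l : ℕ) : ℝ) - 1),
          mul_nonneg (mul_nonneg (by linarith : (0:ℝ) ≤ ((l : ℕ) : ℝ)) (by linarith : (0:ℝ) ≤ ((l : ℕ) : ℝ) - 1)) (by nlinarith : (0:ℝ) ≤ ((l : ℕ) : ℝ) ^ 2 - 1)]
      have h1 : 1 / (((l : ℕ) : ℝ) * (((l : ℕ) : ℝ) - 1) * (((l : ℕ) : ℝ) ^ 2 - 1)) ≤ 1 := by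
        rw [div_le_one (by linarith)]; linarith
      simp only [hf]; linarith
    by_cases hM : Multipliable f
    · exact ge_of_tendsto' hM.hasProd (fun s => Finset.prod_nonneg fun l _ => hnn l)
    · rw [tprod_eq_one_of_not_multipliable hM]; norm_num
  have hsub1 : (Nat.gcd n (k - 1)).primeFactors ⊆ (Nat.gcd n (1 - 1)).primeFactors := by
    simp only [Nat.sub_self, Nat.gcd_zero_right]
    exact Nat.primeFactors_mono (Nat.gcd_dvd_left _ _) hn0
  have hsub2 : (Nat.gcd n (n - 1 - 1)).primeFactors ⊆ (Nat.gcd n (k - 1)).primeFactors := by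
    intro p hp
    rw [Nat.mem_primeFactors] at hp ⊢
    obtain ⟨hpp, hpd, -⟩ := hp
    have hpn : p ∣ n := hpd.trans (Nat.gcd_dvd_left _ _)
    have hpd2 : p ∣ n - 2 := by
      have := hpd.trans (Nat.gcd_dvd_right _ _)
      simpa [Nat.sub_sub] using this
    have hp2 : p = 2 := by
      have h2 : p ∣ 2 := by
        have h := Nat.dvd_sub hpn hpd2
        rwa [show n - (n - 2) = 2 from by omega] at h
      exact (Nat.prime_dvd_prime_iff_eq hpp Nat.prime_two).mp h2
    subst hp2
    have hk2 : ¬ (2 ∣ k) := by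
      intro h
      have h2 : (2 : ℕ) ∣ Nat.gcd k n := Nat.dvd_gcd h hpn
      rw [hk] at h2
      omega
    have hdk1 : (2 : ℕ) ∣ k - 1 := by omega
    exact ⟨Nat.prime_two, Nat.dvd_gcd hpn hdk1,
      fun h => hn0 (Nat.eq_zero_of_gcd_eq_zero_left h)⟩
  have hprime : ∀ m : ℕ, ∀ l ∈ m.primeFactors, l.Prime := fun m l hl => Nat.prime_of_mem_primeFactors hl
  constructor
  · unfold CC
    exact mul_le_mul_of_nonneg_right
      (mul_le_mul_of_nonneg_left (prod_anti hsub1 (hprime _)) hc) hT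
  · unfold CC
    exact mul_le_mul_of_nonneg_right
      (mul_le_mul_of_nonneg_left (prod_anti hsub2 (hprime _)) hc) hT
end

section
/- Let n, m ≥ 1 with gcd(n, m) = 1, k coprime to n, m̲ = ∏_{q^j ∥ m} q^{⌈j/2⌉}, and M = lcm(n, m̲) = n·m̲. Then (1/φ(M)) ∑_{1 ≤ r ≤ M, gcd(r,M)=1, r ≡ k (mod n)} ω_r(m) = (1/(φ(n)·φ(m̲))) ∑_{1 ≤ a ≤ m̲, gcd(a,m̲)=1} ω_a(m). In particular, this quantity is independent of k. -/
lemma coprime_mod_iff (x N : ℕ) : Nat.Coprime (x % N) N ↔ Nat.Coprime x N := by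
  unfold Nat.Coprime
  conv_rhs => rw [Nat.gcd_comm, Nat.gcd_rec]

lemma mbar_dvd (m : ℕ) (hm : 0 < m) : mbar m ∣ m := by
  conv_rhs => rw [← Nat.factorization_prod_pow_eq_self hm.ne']
  rw [Nat.prod_factorization_eq_prod_primeFactors]
  exact Finset.prod_dvd_prod_of_dvd _ _ fun q hq => pow_dvd_pow q (by
    have h1 : 1 ≤ m.factorization q := Nat.Prime.factorization_pos_of_dvd
      (Nat.prime_of_mem_primeFactors hq) hm.ne' (Nat.dvd_of_mem_primeFactors hq)
    omega)

/-- ω depends only on r mod m̲. -/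
lemma omegaFn_congr {r r' m : ℕ} (h : r % mbar m = r' % mbar m) :
    omegaFn r m = omegaFn r' m := by
  unfold omegaFn
  refine Finset.prod_congr rfl fun q hq => ?_
  have hdvd : q ^ ((m.factorization q + 1) / 2) ∣ mbar m := Finset.dvd_prod_of_mem _ hq
  have hr : r % q ^ ((m.factorization q + 1) / 2)
      = r' % q ^ ((m.factorization q + 1) / 2) := by
    rw [← Nat.mod_mod_of_dvd r hdvd, ← Nat.mod_mod_of_dvd r' hdvd, h]
  unfold omegaPP
  rw [hr]

/-- representative of x mod N in Icc 1 N -/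
def toIcc (x N : ℕ) : ℕ := if x % N = 0 then N else x % N

lemma toIcc_mod (x N : ℕ) : toIcc x N % N = x % N := by
  unfold toIcc
  split_ifs with h
  · simp [h]
  · exact Nat.mod_mod_of_dvd x dvd_rfl

lemma toIcc_mem (x N : ℕ) (hN : 0 < N) : toIcc x N ∈ Finset.Icc 1 N := by
  unfold toIcc
  split_ifs with h
  · simp [hN, Nat.one_le_iff_ne_zero.2 hN.ne']
  · simp only [Finset.mem_Icc]
    exact ⟨Nat.one_le_iff_ne_zero.2 h, (Nat.mod_lt x hN).le⟩

lemma toIcc_eq_self {x N : ℕ} (hx : x ∈ Finset.Icc 1 N) : toIcc x N = x := by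
  simp only [Finset.mem_Icc] at hx
  unfold toIcc
  rcases eq_or_lt_of_le hx.2 with h | h
  · subst h; simp
  · rw [Nat.mod_eq_of_lt h]
    simp [Nat.one_le_iff_ne_zero.1 hx.1]

lemma toIcc_congr {x y N : ℕ} (h : x % N = y % N) : toIcc x N = toIcc y N := by
  unfold toIcc; rw [h]

theorem stmt12 (n m k : ℕ) (hn : 0 < n) (hm : 0 < m) (hnm : Nat.Coprime n m)
    (hk : Nat.Coprime k n) :
    (1 / (Nat.totient (Nat.lcm n (mbar m)) : ℝ)) *
        ∑ r ∈ (Finset.Icc 1 (Nat.lcm n (mbar m))).filter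
            (fun r => r.Coprime (Nat.lcm n (mbar m)) ∧ r % n = k % n),
          omegaFn r m =
      (1 / ((Nat.totient n : ℝ) * (Nat.totient (mbar m) : ℝ))) *
        ∑ a ∈ (Finset.Icc 1 (mbar m)).filter (fun a => a.Coprime (mbar m)), omegaFn a m := by
  set b := mbar m with hb
  have hcop : Nat.Coprime n b := hnm.coprime_dvd_right (mbar_dvd m hm)
  have hbpos : 0 < b := mbar_pos m
  have hM : Nat.lcm n b = n * b := Nat.Coprime.lcm_eq_mul hcop
  set M := n * b with hMdef
  have hMpos : 0 < M := Nat.mul_pos hn hbpos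
  have hnM : n ∣ M := dvd_mul_right n b
  have hbM : b ∣ M := dvd_mul_left b n
  rw [hM]
  -- totient
  have htot : (Nat.totient M : ℝ) = (Nat.totient n : ℝ) * (Nat.totient b : ℝ) := by
    rw [← Nat.cast_mul, ← Nat.totient_mul hcop]
  rw [htot]
  congr 1
  -- the sums are equal
  refine Finset.sum_nbij' (fun r => toIcc r b)
    (fun a => toIcc (Nat.chineseRemainder hcop k a).1 M) ?_ ?_ ?_ ?_ ?_
  · intro r hr
    simp only [Finset.mem_filter, Finset.mem_Icc] at hr ⊢
    refine ⟨by simpa using toIcc_mem r b hbpos, ?_⟩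
    rw [← coprime_mod_iff, toIcc_mod, coprime_mod_iff]
    exact (hr.2.1).coprime_dvd_right hbM
  · intro a ha
    simp only [Finset.mem_filter, Finset.mem_Icc] at ha ⊢
    obtain ⟨hc1, hc2⟩ := (Nat.chineseRemainder hcop k a).2
    set c := (Nat.chineseRemainder hcop k a).1
    have hcn : c % n = k % n := hc1
    have hcb : c % b = a % b := hc2
    have hcopc : Nat.Coprime c M := by
      refine Nat.Coprime.mul_right ?_ ?_
      · rw [← coprime_mod_iff, hcn, coprime_mod_iff]; exact hk
      · rw [← coprime_mod_iff, hcb, coprime_mod_iff]; exact ha.2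
    refine ⟨by simpa using toIcc_mem c M hMpos, ?_, ?_⟩
    · rw [← coprime_mod_iff, toIcc_mod, coprime_mod_iff]; exact hcopc
    · rw [← Nat.mod_mod_of_dvd _ hnM, toIcc_mod, Nat.mod_mod_of_dvd _ hnM, hcn]
  · intro r hr
    simp only [Finset.mem_filter, Finset.mem_Icc] at hr
    obtain ⟨hc1, hc2⟩ := (Nat.chineseRemainder hcop k (toIcc r b)).2
    set c := (Nat.chineseRemainder hcop k (toIcc r b)).1
    have hmodM : c % M = r % M := by
      have : c ≡ r [MOD n] ∧ c ≡ r [MOD b] := by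
        constructor
        · exact hc1.trans (hr.2.2).symm
        · exact hc2.trans (by rw [Nat.ModEq, toIcc_mod])
      exact (Nat.modEq_and_modEq_iff_modEq_mul hcop).1 this
    calc toIcc c M = toIcc r M := toIcc_congr hmodM
      _ = r := toIcc_eq_self (Finset.mem_Icc.2 hr.1)
  · intro a ha
    simp only [Finset.mem_filter, Finset.mem_Icc] at ha
    obtain ⟨hc1, hc2⟩ := (Nat.chineseRemainder hcop k a).2
    set c := (Nat.chineseRemainder hcop k a).1
    have h1 : toIcc c M % b = a % b := by
      rw [← Nat.mod_mod_of_dvd _ hbM, toIcc_mod, Nat.mod_mod_of_dvd _ hbM]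
      exact hc2
    calc toIcc (toIcc c M) b = toIcc a b := toIcc_congr h1
      _ = a := toIcc_eq_self (Finset.mem_Icc.2 ha.1)
  · intro r hr
    exact omegaFn_congr (by rw [toIcc_mod])
end

section
/- Define C^{D(m)} = (1/φ(m̲)) ∑_{1 ≤ r ≤ m̲, gcd(r,m̲)=1} ω_r(m) with m̲ = ∏_{q^j ∥ m} q^{⌈j/2⌉}. Then C^{D(2)} = 2/3, C^{D(3)} = 7/16, C^{D(4)} = 5/12, C^{D(5)} = 23/96, C^{D(6)} = 7/24, and C^{D(8)} = 11/48. -/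
/-- The average density `C^{D(m)}` of primes of `m`-divisibility. -/
noncomputable def CD (m : ℕ) : ℝ :=
  (1 / (Nat.totient (mbar m) : ℝ)) *
    ∑ r ∈ (Finset.Icc 1 (mbar m)).filter (fun r => r.Coprime (mbar m)), omegaFn r m

lemma pf2 : Nat.primeFactors 2 = {2} := Nat.Prime.primeFactors Nat.prime_two
lemma pf3 : Nat.primeFactors 3 = {3} := Nat.Prime.primeFactors Nat.prime_three
lemma pf5 : Nat.primeFactors 5 = {5} := Nat.Prime.primeFactors (by norm_num)
lemma pf4 : Nat.primeFactors 4 = {2} := by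
  rw [show (4:ℕ) = 2^2 by norm_num, Nat.primeFactors_prime_pow (by norm_num) Nat.prime_two]
lemma pf8 : Nat.primeFactors 8 = {2} := by
  rw [show (8:ℕ) = 2^3 by norm_num, Nat.primeFactors_prime_pow (by norm_num) Nat.prime_two]
lemma pf6 : Nat.primeFactors 6 = {2, 3} := by
  rw [show (6:ℕ) = 2*3 by norm_num, Nat.primeFactors_mul (by norm_num) (by norm_num),
    Nat.Prime.primeFactors Nat.prime_two, Nat.Prime.primeFactors Nat.prime_three]
  rfl

lemma f2 : Nat.factorization 2 2 = 1 := by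
  rw [Nat.Prime.factorization Nat.prime_two]; simp
lemma f3 : Nat.factorization 3 3 = 1 := by
  rw [Nat.Prime.factorization Nat.prime_three]; simp
lemma f5 : Nat.factorization 5 5 = 1 := by
  rw [Nat.Prime.factorization (by norm_num)]; simp
lemma f4 : Nat.factorization 4 2 = 2 := by
  rw [show (4:ℕ) = 2^2 by norm_num, Nat.Prime.factorization_pow Nat.prime_two]; simp
lemma f8 : Nat.factorization 8 2 = 3 := by
  rw [show (8:ℕ) = 2^3 by norm_num, Nat.Prime.factorization_pow Nat.prime_two]; simp
lemma f62 : Nat.factorization 6 2 = 1 := by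
  rw [show (6:ℕ) = 2*3 by norm_num, Nat.factorization_mul (by norm_num) (by norm_num),
    Nat.Prime.factorization Nat.prime_two, Nat.Prime.factorization Nat.prime_three]
  simp
lemma f63 : Nat.factorization 6 3 = 1 := by
  rw [show (6:ℕ) = 2*3 by norm_num, Nat.factorization_mul (by norm_num) (by norm_num),
    Nat.Prime.factorization Nat.prime_two, Nat.Prime.factorization Nat.prime_three]
  simp

lemma mbar2 : mbar 2 = 2 := by rw [mbar, pf2, Finset.prod_singleton, f2]; norm_num
lemma mbar3 : mbar 3 = 3 := by rw [mbar, pf3, Finset.prod_singleton, f3]; norm_num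
lemma mbar4 : mbar 4 = 2 := by rw [mbar, pf4, Finset.prod_singleton, f4]; norm_num
lemma mbar5 : mbar 5 = 5 := by rw [mbar, pf5, Finset.prod_singleton, f5]; norm_num
lemma mbar8 : mbar 8 = 4 := by rw [mbar, pf8, Finset.prod_singleton, f8]; norm_num
lemma mbar6 : mbar 6 = 6 := by
  rw [mbar, pf6, Finset.prod_pair (by norm_num), f62, f63]; norm_num

theorem stmt15 :
    CD 2 = 2 / 3 ∧ CD 3 = 7 / 16 ∧ CD 4 = 5 / 12 ∧ CD 5 = 23 / 96 ∧
      CD 6 = 7 / 24 ∧ CD 8 = 11 / 48 := by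
  refine ⟨?_, ?_, ?_, ?_, ?_, ?_⟩
  · rw [CD, mbar2, show (Finset.Icc 1 2).filter (fun r => r.Coprime 2) = {1} from by decide,
      Finset.sum_singleton, omegaFn, pf2, Finset.prod_singleton, f2, omegaPP]
    norm_num [Nat.totient_prime Nat.prime_two]
  · rw [CD, mbar3, show (Finset.Icc 1 3).filter (fun r => r.Coprime 3) = {1, 2} from by decide,
      Finset.sum_pair (by norm_num)]
    rw [omegaFn, pf3, Finset.prod_singleton, f3, omegaPP]
    rw [omegaFn, pf3, Finset.prod_singleton, f3, omegaPP]
    norm_num [Nat.totient_prime Nat.prime_three]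
  · rw [CD, mbar4, show (Finset.Icc 1 2).filter (fun r => r.Coprime 2) = {1} from by decide,
      Finset.sum_singleton, omegaFn, pf4, Finset.prod_singleton, f4, omegaPP]
    norm_num [Nat.totient_prime Nat.prime_two]
  · rw [CD, mbar5,
      show (Finset.Icc 1 5).filter (fun r => r.Coprime 5) = {1, 2, 3, 4} from by decide]
    rw [show ({1,2,3,4} : Finset ℕ) = insert 1 (insert 2 ({3,4} : Finset ℕ)) from rfl,
      Finset.sum_insert (by decide), Finset.sum_insert (by decide),
      Finset.sum_pair (by norm_num)]
    rw [omegaFn, pf5, Finset.prod_singleton, f5, omegaPP]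
    rw [omegaFn, pf5, Finset.prod_singleton, f5, omegaPP]
    rw [omegaFn, pf5, Finset.prod_singleton, f5, omegaPP]
    rw [omegaFn, pf5, Finset.prod_singleton, f5, omegaPP]
    norm_num [Nat.totient_prime (show Nat.Prime 5 by norm_num)]
  · rw [CD, mbar6, show (Finset.Icc 1 6).filter (fun r => r.Coprime 6) = {1, 5} from by decide,
      Finset.sum_pair (by norm_num)]
    rw [omegaFn, pf6, Finset.prod_pair (by norm_num), f62, f63, omegaPP, omegaPP]
    rw [omegaFn, pf6, Finset.prod_pair (by norm_num), f62, f63, omegaPP, omegaPP]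
    norm_num [show Nat.totient 6 = 2 from by decide]
  · rw [CD, mbar8, show (Finset.Icc 1 4).filter (fun r => r.Coprime 4) = {1, 3} from by decide,
      Finset.sum_pair (by norm_num)]
    rw [omegaFn, pf8, Finset.prod_singleton, f8, omegaPP]
    rw [omegaFn, pf8, Finset.prod_singleton, f8, omegaPP]
    norm_num [show Nat.totient 4 = 2 from by decide]
end
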